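/- Let M = {v_1^{m_1}, ..., v_ℓ^{m_ℓ}} with distinct ranks and n = Σ m_i. There exists a single-error-correcting code C_K ⊆ S(M) in the Kendall τ-metric (i.e., with minimum Kendall τ-distance at least 3) of size |C_K| ≥ |S(M)| / (2(n − m_1) + 1). -/

import Mathlib

/-!
Call the `s`-th occurrence of a rank `b` a slot, and give the `W = n - m 0` slots of ranks above the
minimum distinct weights in `[1, W]`. An adjacent transposition moves one such slot past a smaller
entry, so the weighted inversion number of a sequence changes by plus or minus that slot's weight.
Hence two codewords with equal weighted inversion number modulo `2W + 1` are not at distance `1`,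
and at distance `2` only if the second step undoes the first. The largest of the `2W + 1` residue
classes is a code of the required size.
-/

/-- `AdjTrans σ π` : the sequence `π` is obtained from the sequence `σ` by exchanging
two distinct adjacent elements (an adjacent transposition). -/
def AdjTrans (σ π : List ℤ) : Prop :=
  ∃ (l₁ l₂ : List ℤ) (a b : ℤ), a ≠ b ∧ σ = l₁ ++ a :: b :: l₂ ∧ π = l₁ ++ b :: a :: l₂

/-- `StepsTo n σ π` : `π` can be obtained from `σ` by a sequence of `n` adjacent
transpositions. -/
def StepsTo : ℕ → List ℤ → List ℤ → Prop
  | 0 => fun σ π => σ = π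
  | n + 1 => fun σ π => ∃ τ, AdjTrans σ τ ∧ StepsTo n τ π

/-- The Kendall τ-distance between two sequences: the minimum number of adjacent
transpositions needed to transform one into the other. -/
noncomputable def dK (σ π : List ℤ) : ℕ := sInf {n | StepsTo n σ π}

/-- The list `[a, a+1, ..., a+len-1]` of integers. -/
def rangeList (a len : ℕ) : List ℤ := (List.range' a len).map (fun x => (x : ℤ))

/-- The substitution map `T_θ`: the `r`-th occurrence (from the left, `0`-indexed) of a
rank `a` in `σ` is replaced by the `r`-th entry of the list `θ a`. -/
def Tmap (θ : ℤ → List ℤ) (σ : List ℤ) : List ℤ :=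
  (List.range σ.length).map (fun j =>
    (θ (σ.getD j 0)).getD ((σ.take j).count (σ.getD j 0)) 0)

/-- `psiEntry σ a s` : the number of positions in `σ` strictly to the right of the `s`-th
occurrence (`0`-indexed) of `a` in `σ` that hold an element smaller than `a`. -/
def psiEntry (σ : List ℤ) (a : ℤ) (s : ℕ) : ℕ :=
  (σ.drop (((σ.indexesOf a).getD s σ.length) + 1)).countP (fun x => decide (x < a))

/-- The Manhattan distance between two vectors of naturals (presented as lists). -/
def manhattanL (x y : List ℕ) : ℕ :=
  ∑ i ∈ Finset.range (max x.length y.length), ((x.getD i 0 : ℤ) - (y.getD i 0 : ℤ)).natAbs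

/-- The Lee distance over `Z_q` between two vectors with entries in `{0, …, q-1}`
(presented as lists). -/
def leeDistL (q : ℕ) (x y : List ℕ) : ℕ :=
  ∑ i ∈ Finset.range (max x.length y.length),
    min (((x.getD i 0 : ℤ) - (y.getD i 0 : ℤ)).natAbs)
      (q - ((x.getD i 0 : ℤ) - (y.getD i 0 : ℤ)).natAbs)

/-- The Lee distance between two vectors over `ZMod q`. -/
def zmodLee {q N : ℕ} (x y : Fin N → ZMod q) : ℕ :=
  ∑ i, min (x i - y i).val (y i - x i).val

/-- `permList k σ` : `σ` is (an ordering representing) a permutation of `{1, …, k}`. -/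
def permList (k : ℕ) (σ : List ℤ) : Prop :=
  (↑σ : Multiset ℤ) = (↑(rangeList 1 k) : Multiset ℤ)

/-- The multiset `M_{k,r} = {0^k, k+1, …, k+r}`. -/
def Mkr (k r : ℕ) : Multiset ℤ :=
  Multiset.replicate k (0 : ℤ) + (↑(rangeList (k + 1) r) : Multiset ℤ)

/-- `α_{↓k}` : delete from `α` all elements larger than `k`. -/
def restrictTo (k : ℕ) (α : List ℤ) : List ℤ :=
  α.filter (fun x => decide (x ≤ (k : ℤ)))

/-- `α_{k↦0}` : replace in `α` every element of `{1, …, k}` by `0`. -/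
def mapToZero (k : ℕ) (α : List ℤ) : List ℤ :=
  α.map (fun x => if 1 ≤ x ∧ x ≤ (k : ℤ) then 0 else x)

/-- `star σ ρ = σ ∗ ρ` : replace the zeros of `ρ`, from left to right, by the elements
of `σ` in order. -/
def starP : List ℤ → List ℤ → List ℤ
  | _, [] => []
  | σ, x :: ρ' => if x = 0 then σ.headD 0 :: starP σ.tail ρ' else x :: starP σ ρ'

theorem AdjTrans.perm {σ τ : List ℤ} (h : AdjTrans σ τ) : σ.Perm τ := by
  obtain ⟨l₁, l₂, a, b, -, rfl, rfl⟩ := h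
  exact (List.Perm.swap b a l₂).append_left l₁

theorem StepsTo.trans : ∀ {m n : ℕ} {σ τ π : List ℤ},
    StepsTo m σ τ → StepsTo n τ π → StepsTo (m + n) σ π
  | 0, n, σ, τ, π, (h₁ : σ = τ), h₂ => by rw [Nat.zero_add, h₁]; exact h₂
  | m + 1, n, σ, τ, π, ⟨ρ, hσρ, hρτ⟩, h₂ => by
    rw [Nat.add_right_comm]; exact ⟨ρ, hσρ, hρτ.trans h₂⟩

theorem StepsTo.cons (x : ℤ) : ∀ {n : ℕ} {σ π : List ℤ},
    StepsTo n σ π → StepsTo n (x :: σ) (x :: π)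
  | 0, σ, π, (h : σ = π) => by rw [h]; rfl
  | n + 1, σ, π, ⟨τ, ⟨l₁, l₂, a, b, hab, hσ, hτ⟩, hτπ⟩ =>
    ⟨x :: τ, ⟨x :: l₁, l₂, a, b, hab, by rw [hσ]; rfl, by rw [hτ]; rfl⟩, hτπ.cons x⟩

theorem List.Perm.exists_stepsTo {σ π : List ℤ} (h : σ.Perm π) : ∃ n, StepsTo n σ π := by
  induction h with
  | nil => exact ⟨0, rfl⟩
  | cons x _ ih => obtain ⟨n, hn⟩ := ih; exact ⟨n, hn.cons x⟩
  | swap x y l =>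
    by_cases hxy : x = y
    · exact ⟨0, by rw [hxy]; rfl⟩
    · exact ⟨1, _, ⟨[], l, y, x, Ne.symm hxy, rfl, rfl⟩, rfl⟩
  | trans _ _ ih₁ ih₂ =>
    obtain ⟨m, hm⟩ := ih₁
    obtain ⟨n, hn⟩ := ih₂
    exact ⟨m + n, hm.trans hn⟩

theorem le_dK_of_perm {σ π : List ℤ} {k : ℕ} (h : σ.Perm π) (hk : ∀ n < k, ¬ StepsTo n σ π) :
    k ≤ dK σ π :=
  le_csInf h.exists_stepsTo fun n hn => not_lt.mp fun hlt => hk n hlt hn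

def RaisesAt (σ τ : List ℤ) (b : ℤ) (t : ℕ) : Prop :=
  ∃ (l₁ l₂ : List ℤ) (c : ℤ), c < b ∧ t = l₂.count b ∧
    σ = l₁ ++ c :: b :: l₂ ∧ τ = l₁ ++ b :: c :: l₂

theorem AdjTrans.exists_raisesAt {σ τ : List ℤ} {a : ℤ} (ha : ∀ x ∈ σ, a ≤ x)
    (h : AdjTrans σ τ) :
    ∃ b t, a < b ∧ t < σ.count b ∧ (RaisesAt σ τ b t ∨ RaisesAt τ σ b t) := by
  obtain ⟨l₁, l₂, x, y, hxy, rfl, rfl⟩ := h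
  have hx : a ≤ x := ha x (by simp)
  have hy : a ≤ y := ha y (by simp)
  rcases hxy.lt_or_gt with hlt | hlt
  · refine ⟨y, l₂.count y, by omega, by simp [hxy]; omega, Or.inl ?_⟩
    exact ⟨l₁, l₂, x, hlt, rfl, rfl, rfl⟩
  · refine ⟨x, l₂.count x, by omega, by simp [hxy.symm]; omega, Or.inr ?_⟩
    exact ⟨l₁, l₂, y, hlt, rfl, rfl, rfl⟩

theorem List.append_cons_inj_of_count_eq (b : ℤ) : ∀ {P₁ P₂ Q₁ Q₂ : List ℤ},
    P₁ ++ b :: Q₁ = P₂ ++ b :: Q₂ → Q₁.count b = Q₂.count b → P₁ = P₂ ∧ Q₁ = Q₂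
  | [], [], Q₁, Q₂, h, _ => ⟨rfl, by simpa using h⟩
  | [], p :: P₂, Q₁, Q₂, h, hc => by
    obtain ⟨-, rfl⟩ := List.cons_eq_cons.mp h
    simp at hc
    omega
  | p :: P₁, [], Q₁, Q₂, h, hc => by
    obtain ⟨-, rfl⟩ := List.cons_eq_cons.mp h
    simp at hc
    omega
  | p₁ :: P₁, p₂ :: P₂, Q₁, Q₂, h, hc => by
    simp only [List.cons_append, List.cons.injEq] at h
    obtain ⟨rfl, h⟩ := h
    obtain ⟨rfl, rfl⟩ := List.append_cons_inj_of_count_eq b h hc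
    exact ⟨rfl, rfl⟩

theorem RaisesAt.left_unique {σ ρ τ : List ℤ} {b : ℤ} {t : ℕ}
    (h : RaisesAt σ τ b t) (h' : RaisesAt ρ τ b t) : σ = ρ := by
  obtain ⟨l₁, l₂, c, hc, rfl, rfl, rfl⟩ := h
  obtain ⟨L₁, L₂, d, hd, ht, rfl, hτ⟩ := h'
  have hcount : (c :: l₂).count b = (d :: L₂).count b := by
    simp [hc.ne, hd.ne, ← ht]
  obtain ⟨rfl, hcd⟩ := List.append_cons_inj_of_count_eq b hτ hcount
  obtain ⟨rfl, rfl⟩ := List.cons_eq_cons.mp hcd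
  rfl

theorem RaisesAt.right_unique {σ ρ τ : List ℤ} {b : ℤ} {t : ℕ}
    (h : RaisesAt τ σ b t) (h' : RaisesAt τ ρ b t) : σ = ρ := by
  obtain ⟨l₁, l₂, c, hc, rfl, hτ, rfl⟩ := h
  obtain ⟨L₁, L₂, d, hd, ht, rfl, rfl⟩ := h'
  have hτ' : (l₁ ++ [c]) ++ b :: l₂ = (L₁ ++ [d]) ++ b :: L₂ := by simpa using hτ.symm
  obtain ⟨hcd, rfl⟩ := List.append_cons_inj_of_count_eq b hτ' ht
  obtain ⟨rfl, hsingleton⟩ := List.append_inj' hcd rfl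
  obtain rfl : c = d := List.singleton_inj.mp hsingleton
  rfl

/-- The paper's `∑ u x s * ψ(x, s)` with `ψ = psiEntry`, except that the occurrences `s` of `x` are
indexed from the right. -/
def weightedInv (u : ℤ → ℕ → ℕ) : List ℤ → ℕ
  | [] => 0
  | x :: r => u x (r.count x) * r.countP (· < x) + weightedInv u r

theorem weightedInv_swap (u : ℤ → ℕ → ℕ) {b c : ℤ} (hcb : c < b) (l₂ : List ℤ) :
    ∀ l₁ : List ℤ, weightedInv u (l₁ ++ b :: c :: l₂) =
      weightedInv u (l₁ ++ c :: b :: l₂) + u b (l₂.count b)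
  | [] => by
    simp [weightedInv, hcb, hcb.ne, hcb.ne', not_lt.mpr hcb.le]
    ring
  | x :: l₁ => by
    have hp : (l₁ ++ b :: c :: l₂).Perm (l₁ ++ c :: b :: l₂) :=
      (List.Perm.swap c b l₂).append_left l₁
    simp only [List.cons_append, weightedInv, hp.count_eq, hp.countP_eq,
      weightedInv_swap u hcb l₂ l₁]
    ring

theorem RaisesAt.weightedInv_eq (u : ℤ → ℕ → ℕ) {σ τ : List ℤ} {b : ℤ} {t : ℕ}
    (h : RaisesAt σ τ b t) : weightedInv u τ = weightedInv u σ + u b t := by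
  obtain ⟨l₁, l₂, c, hcb, rfl, rfl, rfl⟩ := h
  exact weightedInv_swap u hcb l₂ l₁

theorem Multiset.countP_add_count_le {p q : ℤ → Prop} [DecidablePred p] [DecidablePred q]
    (M : Multiset ℤ) {b : ℤ} (hpb : ¬ p b) (hqb : q b) (hpq : ∀ x, p x → q x) :
    M.countP p + M.count b ≤ M.countP q := by
  induction M using Multiset.induction_on with
  | empty => simp
  | cons x M ih =>
    simp only [Multiset.countP_cons, Multiset.count_cons]
    by_cases hx : b = x
    · subst hx; simp [hpb, hqb]; omega
    · by_cases hpx : p x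
      · simp [hpx, hpq x hpx, hx]; omega
      · simp only [hpx, hx, if_false]; split_ifs <;> omega

/-- The weight of the `t`-th occurrence of `b` (counted from the right): the slots `(b, t)` with
`a < b` and `t < M.count b`, ordered lexicographically, receive the weights `1, 2, …`. -/
def slotWeight (M : Multiset ℤ) (a b : ℤ) (t : ℕ) : ℕ :=
  1 + t + M.countP (fun x => a < x ∧ x < b)

section SlotWeight

variable {M : Multiset ℤ} {a b b' : ℤ} {t t' : ℕ}

theorem one_le_slotWeight : 1 ≤ slotWeight M a b t := by
  unfold slotWeight; omega

theorem slotWeight_le (hab : a < b) (ht : t < M.count b) :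
    slotWeight M a b t ≤ M.countP (a < ·) := by
  have := M.countP_add_count_le (p := fun x => a < x ∧ x < b) (q := (a < ·)) (b := b)
    (by simp) hab (fun _ hx => hx.1)
  unfold slotWeight
  omega

theorem slotWeight_lt_slotWeight (hab : a < b) (hbb : b < b') (ht : t < M.count b) :
    slotWeight M a b t < slotWeight M a b' t' := by
  have := M.countP_add_count_le (p := fun x => a < x ∧ x < b) (q := fun x => a < x ∧ x < b')
    (b := b) (by simp) ⟨hab, hbb⟩ (fun _ hx => ⟨hx.1, hx.2.trans hbb⟩)
  unfold slotWeight
  omega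

theorem slotWeight_inj (hab : a < b) (hab' : a < b') (ht : t < M.count b)
    (ht' : t' < M.count b') (h : slotWeight M a b t = slotWeight M a b' t') :
    b = b' ∧ t = t' := by
  rcases lt_trichotomy b b' with hbb | rfl | hbb
  · exact absurd h (slotWeight_lt_slotWeight hab hbb ht).ne
  · exact ⟨rfl, by unfold slotWeight at h; omega⟩
  · exact absurd h (slotWeight_lt_slotWeight hab' hbb ht').ne'

end SlotWeight

section KendallCode

variable {M : Multiset ℤ} {a : ℤ} {σ τ π : List ℤ}

theorem Nat.ModEq.eq_of_add_eq_add {x y c d q : ℕ} (hxy : x ≡ y [MOD q]) (h : x + c = y + d)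
    (hc : c < q) (hd : d < q) : c = d :=
  (hxy.add_left_cancel (congrArg (· % q) h)).eq_of_lt_of_lt hc hd

theorem AdjTrans.exists_weightedInv_eq (ha : ∀ x ∈ M, a ≤ x) (hσ : (σ : Multiset ℤ) = M)
    (h : AdjTrans σ τ) :
    ∃ b t, a < b ∧ t < M.count b ∧
      ((RaisesAt σ τ b t ∧
          weightedInv (slotWeight M a) τ = weightedInv (slotWeight M a) σ + slotWeight M a b t) ∨
        (RaisesAt τ σ b t ∧
          weightedInv (slotWeight M a) σ =
            weightedInv (slotWeight M a) τ + slotWeight M a b t)) := by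
  subst hσ
  obtain ⟨b, t, hab, ht, hr⟩ := h.exists_raisesAt ha
  refine ⟨b, t, hab, by simpa using ht, ?_⟩
  exact hr.imp (fun hr => ⟨hr, hr.weightedInv_eq _⟩) (fun hr => ⟨hr, hr.weightedInv_eq _⟩)

theorem not_adjTrans_of_modEq (ha : ∀ x ∈ M, a ≤ x) (hσ : (σ : Multiset ℤ) = M)
    (hF : weightedInv (slotWeight M a) σ ≡ weightedInv (slotWeight M a) π
      [MOD 2 * M.countP (a < ·) + 1]) :
    ¬ AdjTrans σ π := by
  intro h
  obtain ⟨b, t, hab, ht, ⟨-, he⟩ | ⟨-, he⟩⟩ := h.exists_weightedInv_eq ha hσ <;>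
  have hw₁ := one_le_slotWeight (M := M) (a := a) (b := b) (t := t) <;>
  have hw₂ := slotWeight_le hab ht
  · have := hF.eq_of_add_eq_add (he.symm.trans (add_zero _).symm) (by omega) (by omega)
    omega
  · have := hF.eq_of_add_eq_add ((add_zero _).trans he) (by omega) (by omega)
    omega

/-- The two weights lie in `[1, W]`, so their signed sum vanishes modulo `2W + 1` only if the steps
move the same slot in opposite directions. -/
theorem eq_of_adjTrans_of_adjTrans (ha : ∀ x ∈ M, a ≤ x) (hσ : (σ : Multiset ℤ) = M)
    (hF : weightedInv (slotWeight M a) σ ≡ weightedInv (slotWeight M a) π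
      [MOD 2 * M.countP (a < ·) + 1])
    (h₁ : AdjTrans σ τ) (h₂ : AdjTrans τ π) : σ = π := by
  have hτ : (τ : Multiset ℤ) = M := hσ ▸ (Multiset.coe_eq_coe.mpr h₁.perm).symm
  obtain ⟨b, t, hab, ht, h₁⟩ := h₁.exists_weightedInv_eq ha hσ
  obtain ⟨b', t', hab', ht', h₂⟩ := h₂.exists_weightedInv_eq ha hτ
  have hw₁ := one_le_slotWeight (M := M) (a := a) (b := b) (t := t)
  have hw₁' := one_le_slotWeight (M := M) (a := a) (b := b') (t := t')
  have hw₂ := slotWeight_le hab ht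
  have hw₂' := slotWeight_le hab' ht'
  rcases h₁ with ⟨r₁, e₁⟩ | ⟨r₁, e₁⟩ <;> rcases h₂ with ⟨r₂, e₂⟩ | ⟨r₂, e₂⟩
  · have := hF.eq_of_add_eq_add (c := slotWeight M a b t + slotWeight M a b' t') (d := 0)
      (by omega) (by omega) (by omega)
    omega
  · have hw := hF.eq_of_add_eq_add (e₁.symm.trans e₂) (by omega) (by omega)
    obtain ⟨rfl, rfl⟩ := slotWeight_inj hab hab' ht ht' hw
    exact r₁.left_unique r₂
  · have hw := hF.eq_of_add_eq_add (c := slotWeight M a b' t') (d := slotWeight M a b t)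
      (by omega) (by omega) (by omega)
    obtain ⟨rfl, rfl⟩ := slotWeight_inj hab' hab ht' ht hw
    exact r₁.right_unique r₂
  · have := hF.eq_of_add_eq_add (c := 0) (d := slotWeight M a b t + slotWeight M a b' t')
      (by omega) (by omega) (by omega)
    omega

theorem three_le_dK_of_modEq (ha : ∀ x ∈ M, a ≤ x) (hσ : (σ : Multiset ℤ) = M)
    (hπ : (π : Multiset ℤ) = M)
    (hF : weightedInv (slotWeight M a) σ ≡ weightedInv (slotWeight M a) π
      [MOD 2 * M.countP (a < ·) + 1])
    (hne : σ ≠ π) : 3 ≤ dK σ π := by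
  refine le_dK_of_perm (Multiset.coe_eq_coe.mp (hσ.trans hπ.symm)) fun n hn hsteps => ?_
  interval_cases n
  · exact hne hsteps
  · obtain ⟨τ, h, rfl : τ = π⟩ := hsteps
    exact not_adjTrans_of_modEq ha hσ hF h
  · obtain ⟨τ, h₁, ρ, h₂, rfl : ρ = π⟩ := hsteps
    exact hne (eq_of_adjTrans_of_adjTrans ha hσ hF h₁ h₂)

end KendallCode

theorem exists_kendall_code (M : Multiset ℤ) (a : ℤ) (ha : ∀ x ∈ M, a ≤ x) :
    ∃ C : Set (List ℤ), (∀ σ ∈ C, (σ : Multiset ℤ) = M) ∧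
      (∀ σ ∈ C, ∀ π ∈ C, σ ≠ π → 3 ≤ dK σ π) ∧
      ({σ : List ℤ | (σ : Multiset ℤ) = M}.ncard : ℝ) / (2 * M.countP (a < ·) + 1) ≤ C.ncard := by
  set q := 2 * M.countP (a < ·) + 1
  set F := weightedInv (slotWeight M a)
  set S := M.lists.toFinset
  have hS : ∀ σ, σ ∈ S ↔ (σ : Multiset ℤ) = M := fun σ => by simp [S, eq_comm]
  obtain ⟨r, -, hr⟩ := Finset.exists_le_card_fiber_of_nsmul_le_card_of_maps_to
    (s := S) (t := Finset.range q) (f := fun σ => F σ % q) (b := (S.card : ℝ) / q)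
    (fun σ _ => Finset.mem_range.mpr (Nat.mod_lt _ (by omega))) ⟨0, by simp [q]⟩
    (by simp [q]; field_simp; rfl)
  have hSset : {σ : List ℤ | (σ : Multiset ℤ) = M} = S := by ext σ; simp [hS]
  refine ⟨↑(S.filter (fun σ => F σ % q = r)), fun σ hσ => ?_, fun σ hσ π hπ hne => ?_, ?_⟩
  · simp only [Finset.mem_coe, Finset.mem_filter] at hσ
    exact (hS σ).mp hσ.1
  · simp only [Finset.mem_coe, Finset.mem_filter] at hσ hπ
    exact three_le_dK_of_modEq ha ((hS σ).mp hσ.1) ((hS π).mp hπ.1) (hσ.2.trans hπ.2.symm) hne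
  · rw [hSset, Set.ncard_coe_finset, Set.ncard_coe_finset]
    exact_mod_cast hr

section SumReplicate

variable {ℓ : ℕ} {v : ℕ → ℤ} {m : ℕ → ℕ}

theorem le_of_mem_sum_replicate (hv : ∀ i j, i < j → j < ℓ → v i < v j) {x : ℤ}
    (hx : x ∈ ∑ i ∈ Finset.range ℓ, Multiset.replicate (m i) (v i)) : v 0 ≤ x := by
  obtain ⟨i, hi, hxi⟩ := Multiset.mem_sum.mp hx
  rw [Multiset.eq_of_mem_replicate hxi]
  rcases Nat.eq_zero_or_pos i with rfl | hpos
  · rfl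
  · exact (hv 0 i hpos (Finset.mem_range.mp hi)).le

theorem countP_sum_replicate_le :
    (∑ i ∈ Finset.range ℓ, Multiset.replicate (m i) (v i)).countP (v 0 < ·) ≤
      (∑ i ∈ Finset.range ℓ, m i) - m 0 := by
  have hsum : ∀ k, (∑ i ∈ Finset.range k, Multiset.replicate (m i) (v i)).countP (v 0 < ·) =
      ∑ i ∈ Finset.range k, (Multiset.replicate (m i) (v i)).countP (v 0 < ·) :=
    fun k => map_sum (Multiset.countPAddMonoidHom (v 0 < ·)) _ _
  cases ℓ with
  | zero => simp
  | succ ℓ =>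
    rw [hsum, Finset.sum_range_succ', Finset.sum_range_succ', Nat.add_sub_cancel]
    have h0 : (Multiset.replicate (m 0) (v 0)).countP (v 0 < ·) = 0 :=
      Multiset.countP_eq_zero.mpr fun x hx => by
        rw [Multiset.eq_of_mem_replicate hx]; exact lt_irrefl _
    rw [h0, add_zero]
    refine Finset.sum_le_sum fun i _ => ?_
    simpa using Multiset.countP_le_card (v 0 < ·) (Multiset.replicate (m (i + 1)) (v (i + 1)))

end SumReplicate

theorem stmt8_general (ℓ : ℕ) (v : ℕ → ℤ) (m : ℕ → ℕ)
    (hv : ∀ i j, i < j → j < ℓ → v i < v j) :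
    ∃ CK : Set (List ℤ),
      (∀ σ ∈ CK,
        (↑σ : Multiset ℤ) = ∑ i ∈ Finset.range ℓ, Multiset.replicate (m i) (v i)) ∧
      (∀ σ ∈ CK, ∀ π ∈ CK, σ ≠ π → 3 ≤ dK σ π) ∧
      (({σ : List ℤ | (↑σ : Multiset ℤ) =
          ∑ i ∈ Finset.range ℓ, Multiset.replicate (m i) (v i)}.ncard : ℝ) /
        (2 * ((∑ i ∈ Finset.range ℓ, m i) - m 0) + 1) ≤ (CK.ncard : ℝ)) := by
  obtain ⟨C, hCM, hCdist, hCcard⟩ :=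
    exists_kendall_code _ (v 0) fun x hx => le_of_mem_sum_replicate (m := m) hv hx
  refine ⟨C, hCM, hCdist, ?_⟩
  set n := ∑ i ∈ Finset.range ℓ, m i
  rcases le_or_gt (2 * ((n : ℝ) - m 0) + 1) 0 with hD | hD
  · exact (div_nonpos_of_nonneg_of_nonpos (Nat.cast_nonneg _) hD).trans (Nat.cast_nonneg _)
  · have hm0 : m 0 ≤ n := by
      have : m 0 < n + 1 := by exact_mod_cast (by linarith : (m 0 : ℝ) < n + 1)
      omega
    have hK : ((∑ i ∈ Finset.range ℓ, Multiset.replicate (m i) (v i)).countP (v 0 < ·) : ℝ) ≤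
        n - m 0 := by
      rw [← Nat.cast_sub hm0]
      exact_mod_cast countP_sum_replicate_le
    exact (div_le_div_of_nonneg_left (Nat.cast_nonneg _) (by positivity) (by linarith)).trans
      hCcard

/-- Corollary 1. Let `M = {v 0 ^ m 0, …, v (ℓ-1) ^ m (ℓ-1)}` with distinct
ranks and positive multiplicities, `n = ∑ m i`.  There exists a single-error-correcting
code `C_K ⊆ S(M)` in the Kendall τ-metric (distinct codewords at distance at least `3`)
of size `|C_K| ≥ |S(M)| / (2(n - m 0) + 1)`. -/
theorem stmt8 (ℓ : ℕ) (v : ℕ → ℤ) (m : ℕ → ℕ)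
    (hv : ∀ i j, i < j → j < ℓ → v i < v j)
    (hm : ∀ i, i < ℓ → 0 < m i) :
    ∃ CK : Set (List ℤ),
      (∀ σ ∈ CK,
        (↑σ : Multiset ℤ) = ∑ i ∈ Finset.range ℓ, Multiset.replicate (m i) (v i)) ∧
      (∀ σ ∈ CK, ∀ π ∈ CK, σ ≠ π → 3 ≤ dK σ π) ∧
      (({σ : List ℤ | (↑σ : Multiset ℤ) =
          ∑ i ∈ Finset.range ℓ, Multiset.replicate (m i) (v i)}.ncard : ℝ) /
        (2 * ((∑ i ∈ Finset.range ℓ, m i) - m 0) + 1) ≤ (CK.ncard : ℝ)) :=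
  stmt8_general ℓ v m hv
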